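/- Let A ∈ ℝ^{n×N} be a Parseval frame and T ⊆ {1,…,N} with |T| < n such that A_T* A_T and A_{T^c} A_{T^c}* are invertible. Then (A_{T^c} A_{T^c}*)^k converges, as k → ∞, to I − A_T (A_T* A_T)^{-1} A_T*. -/

import Mathlib

/-! Let `P = A_T (A_T* A_T)⁻¹ A_T*`, the orthogonal projection onto the column space of `A_T`.
The Parseval identity splits `A_{Tᶜ} A_{Tᶜ}* = 1 - A_T A_T*` as `(1 - P) + R` with
`R = P - A_T A_T*`. Since `P A_T = A_T`, the projection `1 - P` and `R` annihilate each other, so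
the `k`-th power is `(1 - P) + R^k` for `k ≥ 1`. Moreover `R = P (A_{Tᶜ} A_{Tᶜ}*) P` is positive
semidefinite and `1 - R = (1 - P) + A_T A_T*` is positive definite (it is invertible), so the
eigenvalues of the Hermitian matrix `R` lie in `[0, 1)` and `R^k → 0`. -/

open Matrix Finset Filter Topology

/-- Euclidean norm of a vector. -/
noncomputable def enorm {k : ℕ} (x : Fin k → ℝ) : ℝ := Real.sqrt (∑ i, x i ^ 2)

/-- `x` has at most `s` nonzero entries. -/
def IsSparse {k : ℕ} (s : ℕ) (x : Fin k → ℝ) : Prop :=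
  (Finset.univ.filter fun i => x i ≠ 0).card ≤ s

/-- Spectral norm (ℓ²-operator norm) of a matrix. -/
noncomputable def specNorm {m k : Type*} [Fintype m] [Fintype k] [DecidableEq k]
    (M : Matrix m k ℝ) : ℝ :=
  ‖LinearMap.toContinuousLinearMap (Matrix.toEuclideanLin M)‖

/-- `cols A T` is the submatrix of `A` consisting of the columns indexed by `T`. -/
def cols {n N : ℕ} (A : Matrix (Fin n) (Fin N) ℝ) (T : Finset (Fin N)) :
    Matrix (Fin n) {i : Fin N // i ∈ T} ℝ := Matrix.of fun r c => A r c.1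

/-- `subv x T` is the subvector of `x` consisting of the entries indexed by `T`. -/
def subv {N : ℕ} (x : Fin N → ℝ) (T : Finset (Fin N)) : {i : Fin N // i ∈ T} → ℝ :=
  fun i => x i.1

/-- The feedback term `(A_T* A_T)⁻¹ A_T* A_{Tᶜ} x_{Tᶜ}`. -/
noncomputable def fb {n N : ℕ} (A : Matrix (Fin n) (Fin N) ℝ) (T : Finset (Fin N))
    (x : Fin N → ℝ) : {i : Fin N // i ∈ T} → ℝ :=
  ((cols A T)ᵀ * cols A T)⁻¹ *ᵥ ((cols A T)ᵀ *ᵥ (cols A Tᶜ *ᵥ subv x Tᶜ))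

open scoped ComplexOrder

section
variable {α : Type*} [Ring α]

theorem IsIdempotentElem.add_pow_succ_of_mul_eq_zero {q r : α} (hq : IsIdempotentElem q)
    (hqr : q * r = 0) (hrq : r * q = 0) (k : ℕ) : (q + r) ^ (k + 1) = q + r ^ (k + 1) := by
  induction k with
  | zero => simp
  | succ k ih =>
    have hrkq : r ^ (k + 1) * q = 0 := by rw [pow_succ, mul_assoc, hrq, mul_zero]
    rw [pow_succ, ih, add_mul, mul_add, mul_add, hq.eq, hqr, hrkq, ← pow_succ, add_zero, zero_add]

theorem IsIdempotentElem.tendsto_add_pow_atTop [TopologicalSpace α] [ContinuousAdd α] {q r : α}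
    (hq : IsIdempotentElem q) (hqr : q * r = 0) (hrq : r * q = 0)
    (hr : Tendsto (r ^ ·) atTop (𝓝 0)) : Tendsto ((q + r) ^ ·) atTop (𝓝 q) := by
  have hlim := (tendsto_const_nhds (x := q)).add hr
  rw [add_zero] at hlim
  refine hlim.congr' ?_
  filter_upwards [eventually_ge_atTop 1] with k hk
  obtain ⟨k, rfl⟩ := Nat.exists_eq_add_of_le' hk
  exact (hq.add_pow_succ_of_mul_eq_zero hqr hrq k).symm

end

namespace Matrix

variable {𝕜 : Type*} [RCLike 𝕜]

section
variable {n : Type*} [Fintype n] [DecidableEq n]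

theorem IsHermitian.tendsto_pow_atTop_nhds_zero {R : Matrix n n 𝕜} (hR : R.IsHermitian)
    (h : ∀ i, |hR.eigenvalues i| < 1) : Tendsto (R ^ ·) atTop (𝓝 0) := by
  set conj := Unitary.conjStarAlgAut 𝕜 _ hR.eigenvectorUnitary
  set D := diagonal (RCLike.ofReal ∘ hR.eigenvalues : n → 𝕜)
  have hpow : ∀ k : ℕ, R ^ k = conj (D ^ k) := fun k => by
    conv_lhs => rw [hR.spectral_theorem]
    exact (map_pow conj D k).symm
  have hD : Tendsto (D ^ ·) atTop (𝓝 0) := by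
    simp_rw [D, diagonal_pow, ← diagonal_zero]
    refine (continuous_id.matrix_diagonal.tendsto 0).comp (tendsto_pi_nhds.2 fun i => ?_)
    exact tendsto_pow_atTop_nhds_zero_of_norm_lt_one (by simpa using h i)
  have hconj : Continuous conj :=
    LinearMap.continuous_of_finiteDimensional (LinearMapClass.linearMap conj)
  simpa only [map_zero] using ((hconj.tendsto 0).comp hD).congr fun k => (hpow k).symm

theorem PosSemidef.tendsto_pow_atTop_nhds_zero {R : Matrix n n 𝕜} (hR : R.PosSemidef)
    (h : (1 - R).PosDef) : Tendsto (R ^ ·) atTop (𝓝 0) :=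
  hR.isHermitian.tendsto_pow_atTop_nhds_zero fun i => by
    have hmem : 1 - hR.isHermitian.eigenvalues i ∈ spectrum ℝ (1 - R) := by
      rw [← map_one (algebraMap ℝ (Matrix n n 𝕜)), ← spectrum.singleton_sub_eq]
      exact Set.sub_mem_sub rfl (hR.isHermitian.spectrum_real_eq_range_eigenvalues ▸ ⟨i, rfl⟩)
    rw [h.isHermitian.spectrum_real_eq_range_eigenvalues] at hmem
    obtain ⟨j, hj⟩ := hmem
    have hpos := h.eigenvalues_pos j
    rw [abs_lt]
    constructor <;> linarith [hR.eigenvalues_nonneg i]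

end

variable {m t : Type*} [Fintype m] [Fintype t] [DecidableEq t]

noncomputable def colSpaceProj (M : Matrix m t 𝕜) : Matrix m m 𝕜 := M * (Mᴴ * M)⁻¹ * Mᴴ

variable {M : Matrix m t 𝕜}

theorem colSpaceProj_mul (hM : IsUnit (Mᴴ * M)) : colSpaceProj M * M = M := by
  rw [colSpaceProj, Matrix.mul_assoc, Matrix.mul_assoc,
    nonsing_inv_mul _ ((isUnit_iff_isUnit_det _).1 hM), Matrix.mul_one]

theorem isStarProjection_colSpaceProj (hM : IsUnit (Mᴴ * M)) :
    IsStarProjection (colSpaceProj M) where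
  isIdempotentElem := by
    rw [IsIdempotentElem]
    nth_rw 2 [colSpaceProj]
    rw [← Matrix.mul_assoc, ← Matrix.mul_assoc, colSpaceProj_mul hM, colSpaceProj]
  isSelfAdjoint := by
    rw [IsSelfAdjoint, star_eq_conjTranspose, colSpaceProj, conjTranspose_mul, conjTranspose_mul,
      conjTranspose_nonsing_inv, conjTranspose_mul, conjTranspose_conjTranspose, Matrix.mul_assoc]

theorem conjTranspose_mul_colSpaceProj (hM : IsUnit (Mᴴ * M)) : Mᴴ * colSpaceProj M = Mᴴ := by
  have := congrArg conjTranspose (colSpaceProj_mul hM)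
  rwa [conjTranspose_mul, ← star_eq_conjTranspose (colSpaceProj M),
    (isStarProjection_colSpaceProj hM).isSelfAdjoint.star_eq] at this

variable [DecidableEq m]

theorem colSpaceProj_sub_mul_conjTranspose (hM : IsUnit (Mᴴ * M)) :
    colSpaceProj M - M * Mᴴ = colSpaceProj M * (1 - M * Mᴴ) * (colSpaceProj M)ᴴ := by
  rw [← star_eq_conjTranspose, (isStarProjection_colSpaceProj hM).isSelfAdjoint.star_eq,
    mul_sub, sub_mul, mul_one, (isStarProjection_colSpaceProj hM).isIdempotentElem.eq,
    ← Matrix.mul_assoc, colSpaceProj_mul hM, Matrix.mul_assoc, conjTranspose_mul_colSpaceProj hM]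

theorem one_sub_colSpaceProj_mul (hM : IsUnit (Mᴴ * M)) : (1 - colSpaceProj M) * M = 0 := by
  rw [Matrix.sub_mul, Matrix.one_mul, colSpaceProj_mul hM, sub_self]

theorem conjTranspose_mul_one_sub_colSpaceProj (hM : IsUnit (Mᴴ * M)) :
    Mᴴ * (1 - colSpaceProj M) = 0 := by
  rw [Matrix.mul_sub, Matrix.mul_one, conjTranspose_mul_colSpaceProj hM, sub_self]

theorem posDef_one_sub_colSpaceProj_add_mul_conjTranspose (hM : IsUnit (Mᴴ * M)) :
    (1 - colSpaceProj M + M * Mᴴ).PosDef := by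
  have hQ := (isStarProjection_colSpaceProj hM).one_sub
  have hpsd : (1 - colSpaceProj M + M * Mᴴ).PosSemidef := by
    refine .add ?_ (posSemidef_self_mul_conjTranspose M)
    have := posSemidef_self_mul_conjTranspose (1 - colSpaceProj M)
    rwa [← star_eq_conjTranspose, hQ.isSelfAdjoint.star_eq, hQ.isIdempotentElem.eq] at this
  refine hpsd.posDef_iff_isUnit.2 ((isUnit_iff_isUnit_det _).2 (isUnit_det_of_right_inverse
    (B := 1 - colSpaceProj M + M * ((Mᴴ * M)⁻¹ * (Mᴴ * M)⁻¹) * Mᴴ) ?_))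
  have hG := mul_nonsing_inv _ ((isUnit_iff_isUnit_det _).1 hM)
  have hMG : M * Mᴴ * M * (Mᴴ * M)⁻¹ = M := by
    rw [Matrix.mul_assoc M, Matrix.mul_assoc, hG, Matrix.mul_one]
  have hMQ : M * Mᴴ * (1 - colSpaceProj M) = 0 := by
    rw [Matrix.mul_assoc, conjTranspose_mul_one_sub_colSpaceProj hM, Matrix.mul_zero]
  simp only [Matrix.add_mul, Matrix.mul_add, ← Matrix.mul_assoc, hQ.isIdempotentElem.eq,
    one_sub_colSpaceProj_mul hM, hMQ, hMG, add_zero, zero_add]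
  rw [← colSpaceProj, sub_add_cancel]

theorem tendsto_pow_one_sub_mul_conjTranspose (hM : IsUnit (Mᴴ * M))
    (h : (1 - M * Mᴴ).PosSemidef) :
    Tendsto ((1 - M * Mᴴ) ^ ·) atTop (𝓝 (1 - colSpaceProj M)) := by
  have hP := isStarProjection_colSpaceProj hM
  rw [show 1 - M * Mᴴ = (1 - colSpaceProj M) + (colSpaceProj M - M * Mᴴ) by abel]
  refine hP.one_sub.isIdempotentElem.tendsto_add_pow_atTop ?_ ?_
    (PosSemidef.tendsto_pow_atTop_nhds_zero ?_ ?_)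
  · rw [mul_sub, hP.one_sub_mul_self, ← Matrix.mul_assoc, one_sub_colSpaceProj_mul hM,
      Matrix.zero_mul, sub_zero]
  · rw [sub_mul, hP.mul_one_sub_self, Matrix.mul_assoc, conjTranspose_mul_one_sub_colSpaceProj hM,
      Matrix.mul_zero, zero_sub, neg_zero]
  · rw [colSpaceProj_sub_mul_conjTranspose hM]
    exact h.mul_mul_conjTranspose_same _
  · rw [sub_sub_eq_add_sub, add_sub_right_comm]
    exact posDef_one_sub_colSpaceProj_add_mul_conjTranspose hM

end Matrix

theorem cols_mul_transpose_add_cols_compl_mul_transpose {n N : ℕ} (A : Matrix (Fin n) (Fin N) ℝ)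
    (T : Finset (Fin N)) : cols A T * (cols A T)ᵀ + cols A Tᶜ * (cols A Tᶜ)ᵀ = A * Aᵀ := by
  ext i j
  simp only [Matrix.add_apply, mul_apply, cols, transpose_apply, of_apply]
  rw [Finset.sum_coe_sort T (fun c => A i c * A j c),
    Finset.sum_coe_sort Tᶜ (fun c => A i c * A j c)]
  exact Finset.sum_add_sum_compl T _

theorem stmt_10_general {n N : ℕ} (A : Matrix (Fin n) (Fin N) ℝ)
    (hParseval : A * Aᵀ = 1) (T : Finset (Fin N))
    (hgram : IsUnit ((cols A T)ᵀ * cols A T)) :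
    Filter.Tendsto (fun k => (cols A Tᶜ * (cols A Tᶜ)ᵀ) ^ k) Filter.atTop
      (nhds ((1 : Matrix (Fin n) (Fin n) ℝ) -
        cols A T * ((cols A T)ᵀ * cols A T)⁻¹ * (cols A T)ᵀ)) := by
  have hcompl : cols A Tᶜ * (cols A Tᶜ)ᵀ = 1 - cols A T * (cols A T)ᵀ := by
    rw [← hParseval, ← cols_mul_transpose_add_cols_compl_mul_transpose, add_sub_cancel_left]
  simp only [← conjTranspose_eq_transpose_of_trivial] at hcompl hgram ⊢
  rw [hcompl]
  exact tendsto_pow_one_sub_mul_conjTranspose hgram (hcompl ▸ posSemidef_self_mul_conjTranspose _)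

/-- `(A_{Tᶜ}A_{Tᶜ}*)^k` converges to `I − A_T (A_T* A_T)⁻¹ A_T*`. -/
theorem stmt_10 {n N : ℕ} (hnN : n < N) (A : Matrix (Fin n) (Fin N) ℝ)
    (hParseval : A * Aᵀ = 1) (T : Finset (Fin N)) (hT : T.card < n)
    (hgram : IsUnit ((cols A T)ᵀ * cols A T))
    (hcompl : IsUnit (cols A Tᶜ * (cols A Tᶜ)ᵀ)) :
    Filter.Tendsto (fun k => (cols A Tᶜ * (cols A Tᶜ)ᵀ) ^ k) Filter.atTop
      (nhds ((1 : Matrix (Fin n) (Fin n) ℝ) -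
        cols A T * ((cols A T)ᵀ * cols A T)⁻¹ * (cols A T)ᵀ)) :=
  stmt_10_general A hParseval T hgram
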